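/- Let λ and μ be minimal roots with λ ⪯ μ, and let s ∈ B. If ρ(s) λ is a positive root that is not minimal, then ρ(s) μ is a positive root that is not minimal. -/

import Mathlib

open Real

variable {B : Type*}

/-- The pairing constant `⟨α_s, α_t⟩` of the standard bilinear form:
`-cos (π / M s t)` if `M s t ≠ 0`, and `-1` if `M s t = 0` (i.e. `m_{s,t} = ∞`). -/
noncomputable def pairing (M : CoxeterMatrix B) (s t : B) : ℝ :=
  if M s t = 0 then -1 else -Real.cos (Real.pi / (M s t : ℝ))

/-- The standard symmetric bilinear form on `V = B → ℝ`. -/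
noncomputable def form [Fintype B] (M : CoxeterMatrix B) (v w : B → ℝ) : ℝ :=
  ∑ s, ∑ t, v s * w t * pairing M s t

/-- The simple root `α_s`, i.e. the standard basis vector at `s`. -/
noncomputable def sroot [DecidableEq B] (s : B) : B → ℝ := Pi.single s 1

/-- `λ` is a root: `λ = ρ(w) α_s` for some `w ∈ W`, `s ∈ B`. -/
def IsRoot [DecidableEq B] (M : CoxeterMatrix B)
    (ρ : M.Group →* Module.End ℝ (B → ℝ)) (lam : B → ℝ) : Prop :=
  ∃ (w : M.Group) (s : B), ρ w (sroot s) = lam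

/-- `λ` is positive: all coordinates are nonnegative. -/
def IsPos (lam : B → ℝ) : Prop := ∀ s, 0 ≤ lam s

/-- `λ` is negative: all coordinates are nonpositive. -/
def IsNeg (lam : B → ℝ) : Prop := ∀ s, lam s ≤ 0

/-- `λ` is a positive root. -/
def IsPosRoot [DecidableEq B] (M : CoxeterMatrix B)
    (ρ : M.Group →* Module.End ℝ (B → ℝ)) (lam : B → ℝ) : Prop :=
  IsRoot M ρ lam ∧ IsPos lam

/-- `λ` dominates `μ`: for every `w ∈ W`, if `ρ(w) μ` is positive then so is `ρ(w) λ`. -/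
def Dominates (M : CoxeterMatrix B)
    (ρ : M.Group →* Module.End ℝ (B → ℝ)) (lam mu : B → ℝ) : Prop :=
  ∀ w : M.Group, IsPos (ρ w mu) → IsPos (ρ w lam)

/-- `λ` is a minimal root: a positive root dominating no positive root other than itself. -/
def IsMinimal [DecidableEq B] (M : CoxeterMatrix B)
    (ρ : M.Group →* Module.End ℝ (B → ℝ)) (lam : B → ℝ) : Prop :=
  IsPosRoot M ρ lam ∧
    ∀ mu, IsPosRoot M ρ mu → Dominates M ρ lam mu → mu = lam

/-- The depth `δ(λ)` of a positive root:
the least Coxeter length of a `w ∈ W` with `ρ(w⁻¹) λ` negative. -/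
noncomputable def depth (M : CoxeterMatrix B)
    (ρ : M.Group →* Module.End ℝ (B → ℝ)) (lam : B → ℝ) : ℕ :=
  sInf {n | ∃ w : M.Group, IsNeg (ρ w⁻¹ lam) ∧ M.toCoxeterSystem.length w = n}

/-- The partial order `λ ⪯ μ` on positive roots:
`μ = ρ(w) λ` for some `w` with `δ(μ) = ℓ(w) + δ(λ)`. -/
def PLE (M : CoxeterMatrix B)
    (ρ : M.Group →* Module.End ℝ (B → ℝ)) (lam mu : B → ℝ) : Prop :=
  ∃ w : M.Group, mu = ρ w lam ∧
    depth M ρ mu = M.toCoxeterSystem.length w + depth M ρ lam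

/-- The Coxeter graph of `M`: distinct `s`, `t` are adjacent iff `M s t ≥ 3` or `M s t = 0`. -/
def coxGraph (M : CoxeterMatrix B) : SimpleGraph B where
  Adj s t := s ≠ t ∧ (M s t = 0 ∨ 3 ≤ M s t)
  symm := by
    constructor
    intro s t h
    exact ⟨h.1.symm, by rw [M.symmetric t s]; exact h.2⟩
  loopless := by constructor; intro s h; exact h.1 rfl

/-- The support of a vector `λ ∈ V`. -/
def supp (lam : B → ℝ) : Set B := {s | lam s ≠ 0}

/-!
If `λ` is minimal but `ρ(s) λ` is a non-minimal positive root, then `ρ(s) λ` dominates `α_s`.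
A positive root `γ` dominating a positive root `ν` has `⟨γ, ν⟩ > 0`, and so does `-r_γ(ν)`, which
replaces `⟨γ, ν⟩` by `2 ⟨γ, ν⟩² - 1`, doubling its angle; hence `⟨γ, ν⟩ ≥ 1`, and in particular
`⟨λ, α_s⟩ ≤ -1`. Write `μ = ρ(w) λ` with `δ(μ) = ℓ(w) + δ(λ)` and follow a reduced word of `w`:
depth additivity makes every intermediate root minimal and every step pair negatively with the
simple root applied, so `⟨·, α_s⟩ ≤ -1` persists unless `w` sends `α_s` to a negative root. In the
first case `⟨ρ(s) μ, α_s⟩ ≥ 1`, so `ρ(s) μ` dominates `α_s`. In the second, conjugating by `s w s`,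
`ρ(s) μ` dominates the positive root `ρ(s) (-ρ(w) α_s)`.
-/

open CoxeterSystem

namespace CoxeterMatrix

variable (M : CoxeterMatrix B) {s t : B}

lemma two_le_of_ne_zero (hst : s ≠ t) (h : M s t ≠ 0) : (2 : ℝ) ≤ M s t := by
  have := M.off_diagonal s t hst
  exact_mod_cast (show 2 ≤ M s t by omega)

lemma sin_pi_div_pos (hst : s ≠ t) (h : M s t ≠ 0) : 0 < Real.sin (π / M s t) := by
  have h2 := M.two_le_of_ne_zero hst h
  apply Real.sin_pos_of_pos_of_lt_pi (div_pos pi_pos (by linarith))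
  rw [div_lt_iff₀ (by linarith)]
  nlinarith [pi_pos]

end CoxeterMatrix

lemma pairing_comm (M : CoxeterMatrix B) (s t : B) : pairing M s t = pairing M t s := by
  rw [pairing, pairing, M.symmetric]

lemma pairing_self (M : CoxeterMatrix B) (s : B) : pairing M s s = 1 := by
  simp [pairing, Real.cos_pi]

lemma pairing_nonpos (M : CoxeterMatrix B) {s t : B} (h : s ≠ t) : pairing M s t ≤ 0 := by
  unfold pairing
  split_ifs with h0
  · norm_num
  · have h2 := M.two_le_of_ne_zero h h0
    have : 0 ≤ π / M s t := by positivity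
    have : π / M s t ≤ π / 2 := div_le_div_of_nonneg_left pi_pos.le two_pos h2
    linarith [Real.cos_nonneg_of_neg_pi_div_two_le_of_le (by linarith) this]

section Form

variable [Fintype B] {M : CoxeterMatrix B}

lemma form_eq_dotProduct (v w : B → ℝ) :
    form M v w = v ⬝ᵥ (Matrix.of (pairing M)).mulVec w := by
  simp only [form, dotProduct, Matrix.mulVec, Matrix.of_apply, Finset.mul_sum]
  exact Finset.sum_congr rfl fun _ _ => Finset.sum_congr rfl fun _ _ => by ring

lemma form_comm (v w : B → ℝ) : form M v w = form M w v := by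
  rw [form, form, Finset.sum_comm]
  simp only [pairing_comm M, mul_comm]

lemma form_add_left (u v w : B → ℝ) : form M (u + v) w = form M u w + form M v w := by
  simp [form_eq_dotProduct]

lemma form_sub_left (u v w : B → ℝ) : form M (u - v) w = form M u w - form M v w := by
  simp [form_eq_dotProduct]

lemma form_smul_left (c : ℝ) (v w : B → ℝ) : form M (c • v) w = c * form M v w := by
  simp [form_eq_dotProduct]

lemma form_neg_left (v w : B → ℝ) : form M (-v) w = -form M v w := by
  simp [form_eq_dotProduct]

lemma form_sub_right (u v w : B → ℝ) : form M u (v - w) = form M u v - form M u w := by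
  simp [form_eq_dotProduct, Matrix.mulVec_sub]

lemma form_smul_right (c : ℝ) (v w : B → ℝ) : form M v (c • w) = c * form M v w := by
  simp [form_eq_dotProduct, Matrix.mulVec_smul]

lemma form_neg_right (v w : B → ℝ) : form M v (-w) = -form M v w := by
  simp [form_eq_dotProduct, Matrix.mulVec_neg]

variable [DecidableEq B]

lemma form_sroot_sroot (s t : B) : form M (sroot s) (sroot t) = pairing M s t := by
  simp [form_eq_dotProduct, sroot, Matrix.mulVec_single]

end Form

section Positivity

lemma isPos_neg_iff {v : B → ℝ} : IsPos (-v) ↔ IsNeg v := by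
  simp [IsPos, IsNeg]

lemma isNeg_neg_iff {v : B → ℝ} : IsNeg (-v) ↔ IsPos v := by
  simp [IsPos, IsNeg]

variable {v w : B → ℝ} {a b c : ℝ}

lemma IsPos.smul_add_smul (hv : IsPos v) (hw : IsPos w) (ha : 0 ≤ a) (hb : 0 ≤ b) :
    IsPos (a • v + b • w) := fun i => by
  have := hv i; have := hw i
  simp only [Pi.add_apply, Pi.smul_apply, smul_eq_mul]
  positivity

lemma IsPos.sub_smul (hv : IsPos v) (hw : IsPos w) (hc : c ≤ 0) : IsPos (v - c • w) :=
  fun i => by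
  have := hv i; have := hw i
  simp only [Pi.sub_apply, Pi.smul_apply, smul_eq_mul]
  nlinarith

lemma IsNeg.sub_smul (hv : IsNeg v) (hw : IsPos w) (hc : 0 ≤ c) : IsNeg (v - c • w) :=
  fun i => by
  have := hv i; have := hw i
  simp only [Pi.sub_apply, Pi.smul_apply, smul_eq_mul]
  nlinarith

lemma IsNeg.sub_smul_of_isNeg (hv : IsNeg v) (hw : IsNeg w) (hc : c ≤ 0) : IsNeg (v - c • w) :=
  fun i => by
  have := hv i; have := hw i
  simp only [Pi.sub_apply, Pi.smul_apply, smul_eq_mul]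
  nlinarith

variable [DecidableEq B]

lemma isPos_sroot (s : B) : IsPos (sroot s) := fun t => by
  by_cases h : t = s <;> simp [sroot, h]

lemma sroot_self (s : B) : sroot (B := B) s s = 1 := Pi.single_eq_same s 1

lemma not_isPos_neg_sroot (s : B) : ¬ IsPos (-sroot s) := fun h => by
  have := h s
  norm_num [sroot_self] at this

end Positivity

/-- The coordinates of the roots in the dihedral root subsystem spanned by `α_s` and `α_t`. -/
noncomputable def dihedralCoeff (M : CoxeterMatrix B) (s t : B) (j : ℕ) : ℝ :=
  if M s t = 0 then j else Real.sin (j * (π / M s t)) / Real.sin (π / M s t)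

section DihedralCoeff

variable {M : CoxeterMatrix B} {s t : B}

lemma dihedralCoeff_zero : dihedralCoeff M s t 0 = 0 := by
  simp [dihedralCoeff]

lemma dihedralCoeff_one (hst : s ≠ t) : dihedralCoeff M s t 1 = 1 := by
  unfold dihedralCoeff
  split_ifs with h
  · simp
  · simp [(M.sin_pi_div_pos hst h).ne']

lemma dihedralCoeff_add_two (j : ℕ) :
    dihedralCoeff M s t (j + 2) =
      -(2 * pairing M s t) * dihedralCoeff M s t (j + 1) - dihedralCoeff M s t j := by
  unfold dihedralCoeff pairing
  split_ifs with h
  · push_cast; ring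
  · set θ := π / M s t
    have h1 : ((j : ℝ) + 2) * θ = ((j : ℝ) + 1) * θ + θ := by ring
    have h2 : (j : ℝ) * θ = ((j : ℝ) + 1) * θ - θ := by ring
    push_cast
    rw [h1, h2, Real.sin_add, Real.sin_sub]
    ring

lemma dihedralCoeff_nonneg (hst : s ≠ t) {j : ℕ} (hj : M s t = 0 ∨ j ≤ M s t) :
    0 ≤ dihedralCoeff M s t j := by
  unfold dihedralCoeff
  split_ifs with h
  · positivity
  have hm : (0 : ℝ) < M s t := by exact_mod_cast Nat.pos_of_ne_zero h
  refine div_nonneg (Real.sin_nonneg_of_nonneg_of_le_pi (by positivity) ?_)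
    (M.sin_pi_div_pos hst h).le
  calc (j : ℝ) * (π / M s t) ≤ M s t * (π / M s t) := by
        gcongr
        exact_mod_cast hj.resolve_left h
    _ = π := by field_simp

end DihedralCoeff

/-- Writing `x = cos φ`, the map `y ↦ 2 y² - 1` doubles `φ`. -/
lemma exists_iterate_two_mul_sq_sub_one_nonpos {x : ℝ} (hx : x < 1) :
    ∃ n, (fun y : ℝ => 2 * y ^ 2 - 1)^[n] x ≤ 0 := by
  by_contra! hpos
  set φ := Real.arccos x
  have hx0 : 0 < x := by simpa using hpos 0
  have hcos : ∀ n, (fun y : ℝ => 2 * y ^ 2 - 1)^[n] x = Real.cos (2 ^ n * φ) := by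
    intro n
    induction n with
    | zero => simp [φ, Real.cos_arccos (by linarith) hx.le]
    | succ n ih =>
      rw [Function.iterate_succ_apply', ih, show (2 : ℝ) ^ (n + 1) * φ = 2 * (2 ^ n * φ) by ring,
        Real.cos_two_mul]
  have hφ : 0 < φ := Real.arccos_pos.mpr hx
  have hsmall : ∀ n, 2 ^ n * φ < π / 2 := by
    intro n
    induction n with
    | zero => simpa [φ] using Real.arccos_lt_pi_div_two.mpr hx0
    | succ n ih =>
      by_contra! hge
      have := Real.cos_nonpos_of_pi_div_two_le_of_le hge (by rw [pow_succ]; nlinarith [pi_pos])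
      linarith [hcos (n + 1) ▸ hpos (n + 1)]
  obtain ⟨n, hn⟩ := pow_unbounded_of_one_lt (π / 2 / φ) one_lt_two
  rw [div_lt_iff₀ hφ] at hn
  linarith [hsmall n]

namespace CoxeterSystem

variable {W : Type*} [Group W] {M : CoxeterMatrix B} (cs : CoxeterSystem M W)

lemma length_mul_wordProd_le (u : W) (ω : List B) :
    cs.length (u * cs.wordProd ω) ≤ cs.length u + ω.length :=
  (cs.length_mul_le u _).trans (Nat.add_le_add_left (cs.length_wordProd_le ω) _)

lemma isReduced_of_length_mul_eq {u : W} {ω : List B}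
    (h : cs.length (u * cs.wordProd ω) = cs.length u + ω.length) : cs.IsReduced ω :=
  le_antisymm (cs.length_wordProd_le ω) (by have := cs.length_mul_le u (cs.wordProd ω); omega)

lemma eq_mul_wordProd_alternatingWord_succ {s t : B} {w u : W} {k : ℕ}
    (hs : cs.IsRightDescent w s)
    (h : w * cs.simple s = u * cs.wordProd (alternatingWord s t k) ∨
      w * cs.simple s = u * cs.wordProd (alternatingWord t s k))
    (hl : cs.length (w * cs.simple s) = cs.length u + k) :
    w = u * cs.wordProd (alternatingWord t s (k + 1)) := by
  have hlen := cs.isRightDescent_iff.mp hs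
  rcases h with h | h
  · rw [alternatingWord_succ, wordProd_concat, ← mul_assoc, ← h,
      simple_mul_simple_cancel_right]
  cases k with
  | zero =>
    simp only [alternatingWord, wordProd_nil, mul_one] at h
    simp [← h, alternatingWord]
  | succ j =>
    rw [alternatingWord_succ, wordProd_concat, ← mul_assoc, mul_left_inj] at h
    have := cs.length_mul_wordProd_le u (alternatingWord s t j)
    simp only [← h, length_alternatingWord] at this
    omega

/-- `u` is the minimal element of the coset `w ⟨s, t⟩`. -/
lemma exists_eq_mul_wordProd_alternatingWord (s t : B) (w : W) :
    ∃ (u : W) (k : ℕ), (w = u * cs.wordProd (alternatingWord s t k) ∨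
      w = u * cs.wordProd (alternatingWord t s k)) ∧ cs.length w = cs.length u + k ∧
      ¬ cs.IsRightDescent u s ∧ ¬ cs.IsRightDescent u t := by
  induction hn : cs.length w using Nat.strong_induction_on generalizing w with
  | _ n ih =>
  by_cases hs : cs.IsRightDescent w s
  · obtain ⟨u, k, h, hl, hus, hut⟩ := ih _ (hn ▸ hs) (w * cs.simple s) rfl
    refine ⟨u, k + 1, .inr (cs.eq_mul_wordProd_alternatingWord_succ hs h hl), ?_, hus, hut⟩
    have := cs.isRightDescent_iff.mp hs
    omega
  by_cases ht : cs.IsRightDescent w t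
  · obtain ⟨u, k, h, hl, hus, hut⟩ := ih _ (hn ▸ ht) (w * cs.simple t) rfl
    refine ⟨u, k + 1, .inl (cs.eq_mul_wordProd_alternatingWord_succ ht h.symm hl), ?_, hus, hut⟩
    have := cs.isRightDescent_iff.mp ht
    omega
  exact ⟨w, 0, .inl (by simp [alternatingWord]), by simp [hn], hs, ht⟩

lemma exists_eq_mul_wordProd_alternatingWord_of_not_isRightDescent {s t : B} {w : W}
    (h : ¬ cs.IsRightDescent w s) :
    ∃ (u : W) (k : ℕ), w = u * cs.wordProd (alternatingWord s t k) ∧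
      cs.length w = cs.length u + k ∧ ¬ cs.IsRightDescent u s ∧ ¬ cs.IsRightDescent u t := by
  obtain ⟨u, k, hw | hw, hl, hus, hut⟩ := cs.exists_eq_mul_wordProd_alternatingWord s t w
  · exact ⟨u, k, hw, hl, hus, hut⟩
  cases k with
  | zero => exact ⟨u, 0, by simpa [alternatingWord] using hw, hl, hus, hut⟩
  | succ j =>
    refine absurd ?_ h
    rw [IsRightDescent, hl, hw, alternatingWord_succ, wordProd_concat, ← mul_assoc,
      simple_mul_simple_cancel_right]
    have := cs.length_mul_wordProd_le u (alternatingWord s t j)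
    simp only [length_alternatingWord] at this
    omega

end CoxeterSystem

def IsGeometricRep [Fintype B] [DecidableEq B] (M : CoxeterMatrix B)
    (ρ : M.Group →* Module.End ℝ (B → ℝ)) : Prop :=
  ∀ (s : B) (v : B → ℝ),
    ρ (M.toCoxeterSystem.simple s) v = v - (2 * form M v (sroot s)) • sroot s

section Representation

variable {M : CoxeterMatrix B} (ρ : M.Group →* Module.End ℝ (B → ℝ))

local prefix:100 "σ" => M.toCoxeterSystem.simple

lemma map_mul_apply (w w' : M.Group) (v : B → ℝ) : ρ (w * w') v = ρ w (ρ w' v) := by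
  rw [map_mul, Module.End.mul_apply]

lemma map_simple_apply_simple (s : B) (v : B → ℝ) : ρ (σ s) (ρ (σ s) v) = v := by
  rw [← map_mul_apply, simple_mul_simple_self, map_one, Module.End.one_apply]

variable {ρ}

lemma Dominates.apply {lam mu : B → ℝ} (h : Dominates M ρ lam mu) (u : M.Group) :
    Dominates M ρ (ρ u lam) (ρ u mu) := fun w hw => by
  rw [← map_mul_apply] at hw ⊢
  exact h (w * u) hw

variable [DecidableEq B]

lemma isRoot_sroot (s : B) : IsRoot M ρ (sroot s) := ⟨1, s, by simp⟩

lemma isPosRoot_sroot (s : B) : IsPosRoot M ρ (sroot s) := ⟨isRoot_sroot s, isPos_sroot s⟩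

lemma IsRoot.apply {lam : B → ℝ} (h : IsRoot M ρ lam) (w : M.Group) : IsRoot M ρ (ρ w lam) := by
  obtain ⟨u, s, rfl⟩ := h
  exact ⟨w * u, s, map_mul_apply ρ w u _⟩

lemma not_isMinimal_of_dominates {lam mu : B → ℝ} (hdom : Dominates M ρ lam mu)
    (hmu : IsPosRoot M ρ mu) (hne : mu ≠ lam) : ¬ IsMinimal M ρ lam :=
  fun hlam => hne (hlam.2 mu hmu hdom)

end Representation

lemma depth_le_length {M : CoxeterMatrix B} {ρ : M.Group →* Module.End ℝ (B → ℝ)}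
    {lam : B → ℝ} {w : M.Group} (h : IsNeg (ρ w⁻¹ lam)) :
    depth M ρ lam ≤ M.toCoxeterSystem.length w :=
  Nat.sInf_le ⟨w, h, rfl⟩

namespace IsGeometricRep

variable [Fintype B] [DecidableEq B] {M : CoxeterMatrix B}
  {ρ : M.Group →* Module.End ℝ (B → ℝ)}

local prefix:100 "σ" => M.toCoxeterSystem.simple
local prefix:100 "ℓ" => M.toCoxeterSystem.length

lemma apply_simple_sroot (hρ : IsGeometricRep M ρ) (s : B) : ρ (σ s) (sroot s) = -sroot s := by
  rw [hρ, form_sroot_sroot, pairing_self]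
  module

lemma form_apply_simple (hρ : IsGeometricRep M ρ) (s : B) (v u : B → ℝ) :
    form M (ρ (σ s) v) (ρ (σ s) u) = form M v u := by
  simp only [hρ s, form_sub_left, form_sub_right, form_smul_left, form_smul_right,
    form_sroot_sroot, pairing_self, form_comm (sroot s) u]
  ring

lemma form_apply (hρ : IsGeometricRep M ρ) (w : M.Group) (v u : B → ℝ) :
    form M (ρ w v) (ρ w u) = form M v u := by
  induction w using M.toCoxeterSystem.simple_induction_left generalizing v u with
  | one => simp
  | mul_simple_left w s ih => rw [map_mul_apply, map_mul_apply, hρ.form_apply_simple, ih]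

lemma form_apply_left (hρ : IsGeometricRep M ρ) (w : M.Group) (v u : B → ℝ) :
    form M (ρ w v) u = form M v (ρ w⁻¹ u) := by
  conv_rhs => rw [← hρ.form_apply w, Representation.self_inv_apply ρ]

lemma form_apply_simple_sroot (hρ : IsGeometricRep M ρ) (s : B) (v : B → ℝ) :
    form M (ρ (σ s) v) (sroot s) = -form M v (sroot s) := by
  rw [hρ.form_apply_left, inv_simple, hρ.apply_simple_sroot, form_neg_right]

lemma isRoot_neg (hρ : IsGeometricRep M ρ) {lam : B → ℝ} (h : IsRoot M ρ lam) :
    IsRoot M ρ (-lam) := by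
  obtain ⟨u, s, rfl⟩ := h
  exact ⟨u * σ s, s, by rw [map_mul_apply, hρ.apply_simple_sroot, map_neg]⟩

lemma form_self_of_isRoot (hρ : IsGeometricRep M ρ) {lam : B → ℝ} (h : IsRoot M ρ lam) :
    form M lam lam = 1 := by
  obtain ⟨u, s, rfl⟩ := h
  rw [hρ.form_apply, form_sroot_sroot, pairing_self]

lemma not_isPos_of_isNeg (hρ : IsGeometricRep M ρ) {lam : B → ℝ} (h : IsRoot M ρ lam)
    (hneg : IsNeg lam) : ¬ IsPos lam := fun hpos => by
  have hzero : lam = 0 := funext fun s => le_antisymm (hneg s) (hpos s)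
  simpa [hzero, form] using hρ.form_self_of_isRoot h

lemma exists_reflection (hρ : IsGeometricRep M ρ) {γ : B → ℝ} (h : IsRoot M ρ γ) :
    ∃ r : M.Group, ∀ v, ρ r v = v - (2 * form M v γ) • γ := by
  obtain ⟨u, s, rfl⟩ := h
  refine ⟨u * σ s * u⁻¹, fun v => ?_⟩
  rw [map_mul_apply, map_mul_apply, hρ, map_sub, map_smul, Representation.self_inv_apply ρ,
    hρ.form_apply_left, inv_inv]

/-! ### Roots are positive or negative -/

lemma apply_wordProd_alternatingWord_sroot (hρ : IsGeometricRep M ρ) {s t : B} (hst : s ≠ t)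
    (k : ℕ) :
    ρ (M.toCoxeterSystem.wordProd (alternatingWord s t k)) (sroot s) =
      (if Even k then dihedralCoeff M s t (k + 1) else dihedralCoeff M s t k) • sroot s +
      (if Even k then dihedralCoeff M s t k else dihedralCoeff M s t (k + 1)) • sroot t := by
  induction k with
  | zero => simp [alternatingWord, dihedralCoeff_zero, dihedralCoeff_one hst]
  | succ k ih =>
    have hrec := dihedralCoeff_add_two (M := M) (s := s) (t := t) k
    rw [alternatingWord_succ', wordProd_cons, map_mul_apply, ih, hρ]
    by_cases hk : Even k
    · have hk1 : ¬ Even (k + 1) := by simp [Nat.even_add_one, hk]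
      simp only [if_pos hk, if_neg hk1, form_add_left, form_smul_left, form_sroot_sroot,
        pairing_self]
      ext j
      simp only [Pi.add_apply, Pi.sub_apply, Pi.smul_apply, smul_eq_mul]
      linear_combination (-(sroot t j)) * hrec
    · have hk1 : Even (k + 1) := Nat.even_add_one.mpr hk
      simp only [if_neg hk, if_pos hk1, form_add_left, form_smul_left, form_sroot_sroot,
        pairing_self, pairing_comm M t s]
      ext j
      simp only [Pi.add_apply, Pi.sub_apply, Pi.smul_apply, smul_eq_mul]
      linear_combination (-(sroot s j)) * hrec

lemma exists_apply_wordProd_alternatingWord_sroot (hρ : IsGeometricRep M ρ) {s t : B}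
    (hst : s ≠ t) {k : ℕ} (hk : M s t = 0 ∨ k < M s t) :
    ∃ a b : ℝ, 0 ≤ a ∧ 0 ≤ b ∧
      ρ (M.toCoxeterSystem.wordProd (alternatingWord s t k)) (sroot s) =
        a • sroot s + b • sroot t := by
  have h0 := dihedralCoeff_nonneg hst (hk.imp_right le_of_lt)
  have h1 := dihedralCoeff_nonneg hst (hk.imp_right Nat.succ_le_of_lt)
  rw [hρ.apply_wordProd_alternatingWord_sroot hst]
  split_ifs
  exacts [⟨_, _, h1, h0, rfl⟩, ⟨_, _, h0, h1, rfl⟩]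

/-- Write `w = u v` with `v` in the dihedral subgroup `⟨s, t⟩` for a right descent `t` of `w`
and `u` minimal in its coset; then `ρ(v) α_s` is a nonnegative combination of `α_s` and `α_t`. -/
theorem isPos_apply_sroot_of_not_isRightDescent (hρ : IsGeometricRep M ρ) {w : M.Group}
    {s : B} (h : ¬ M.toCoxeterSystem.IsRightDescent w s) : IsPos (ρ w (sroot s)) := by
  induction hn : ℓ w using Nat.strong_induction_on generalizing w s with
  | _ n ih =>
  rcases eq_or_ne w 1 with rfl | hw1
  · simpa using isPos_sroot s
  obtain ⟨t, ht⟩ := M.toCoxeterSystem.exists_rightDescent_of_ne_one hw1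
  have hst : s ≠ t := by rintro rfl; exact h ht
  obtain ⟨u, k, rfl, hl, hus, hut⟩ :=
    M.toCoxeterSystem.exists_eq_mul_wordProd_alternatingWord_of_not_isRightDescent (t := t) h
  have hk : k ≠ 0 := by rintro rfl; simp [alternatingWord] at ht; exact hut ht
  have hred : M s t = 0 ∨ k < M s t := by
    by_contra! hc
    refine M.toCoxeterSystem.not_isReduced_alternatingWord t s (m := k + 1)
      (by rw [M.symmetric]; exact hc.1) (by rw [M.symmetric]; omega)
      (M.toCoxeterSystem.isReduced_of_length_mul_eq (u := u) ?_)
    have hlen := M.toCoxeterSystem.not_isRightDescent_iff.mp h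
    rw [mul_assoc, ← wordProd_concat, ← alternatingWord_succ] at hlen
    rw [hlen, hl, length_alternatingWord, add_assoc]
  obtain ⟨a, b, ha, hb, hab⟩ := hρ.exists_apply_wordProd_alternatingWord_sroot hst hred
  rw [map_mul_apply, hab, map_add, map_smul, map_smul]
  exact (ih _ (by omega) hus rfl).smul_add_smul (ih _ (by omega) hut rfl) ha hb

theorem isNeg_apply_sroot_of_isRightDescent (hρ : IsGeometricRep M ρ) {w : M.Group} {s : B}
    (h : M.toCoxeterSystem.IsRightDescent w s) : IsNeg (ρ w (sroot s)) := by
  have := hρ.isPos_apply_sroot_of_not_isRightDescent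
    (M.toCoxeterSystem.isRightDescent_iff_not_isRightDescent_mul.mp h)
  rwa [map_mul_apply, hρ.apply_simple_sroot, map_neg, isPos_neg_iff] at this

theorem isPos_or_isNeg (hρ : IsGeometricRep M ρ) {lam : B → ℝ} (h : IsRoot M ρ lam) :
    IsPos lam ∨ IsNeg lam := by
  obtain ⟨w, s, rfl⟩ := h
  by_cases hd : M.toCoxeterSystem.IsRightDescent w s
  · exact .inr (hρ.isNeg_apply_sroot_of_isRightDescent hd)
  · exact .inl (hρ.isPos_apply_sroot_of_not_isRightDescent hd)

lemma isNeg_of_not_isPos (hρ : IsGeometricRep M ρ) {lam : B → ℝ} (h : IsRoot M ρ lam)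
    (hpos : ¬ IsPos lam) : IsNeg lam :=
  (hρ.isPos_or_isNeg h).resolve_left hpos

lemma eq_sroot_of_isNeg_apply_simple (hρ : IsGeometricRep M ρ) {γ : B → ℝ}
    (hγ : IsPosRoot M ρ γ) {s : B} (hneg : IsNeg (ρ (σ s) γ)) : γ = sroot s := by
  rw [hρ s γ] at hneg
  have hcoord : ∀ i ≠ s, γ i = 0 := fun i hi =>
    le_antisymm (by simpa [sroot, hi] using hneg i) (hγ.2 i)
  have hγs : γ = γ s • sroot s := funext fun i => by
    by_cases hi : i = s
    · simp [hi, sroot_self]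
    · simp [hcoord i hi, sroot, hi]
  have hnorm := hρ.form_self_of_isRoot hγ.1
  rw [hγs, form_smul_left, form_smul_right, form_sroot_sroot, pairing_self] at hnorm
  have : γ s = 1 := by nlinarith [hγ.2 s]
  rw [hγs, this, one_smul]

lemma isPosRoot_apply_simple (hρ : IsGeometricRep M ρ) {γ : B → ℝ} (hγ : IsPosRoot M ρ γ)
    {s : B} (hne : γ ≠ sroot s) : IsPosRoot M ρ (ρ (σ s) γ) := by
  refine ⟨hγ.1.apply _, ?_⟩
  by_contra hpos
  exact hne (hρ.eq_sroot_of_isNeg_apply_simple hγ (hρ.isNeg_of_not_isPos (hγ.1.apply _) hpos))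

lemma isNeg_apply_simple (hρ : IsGeometricRep M ρ) {η : B → ℝ} (hη : IsRoot M ρ η)
    (hneg : IsNeg η) {s : B} (hne : η ≠ -sroot s) : IsNeg (ρ (σ s) η) := by
  have := (hρ.isPosRoot_apply_simple ⟨hρ.isRoot_neg hη, isPos_neg_iff.mpr hneg⟩
    (s := s) fun h => hne (neg_eq_iff_eq_neg.mp h)).2
  rwa [map_neg, isPos_neg_iff] at this

lemma apply_simple_ne_sroot (hρ : IsGeometricRep M ρ) {v : B → ℝ} (hv : IsPos v) (s : B) :
    ρ (σ s) v ≠ sroot s := fun h => by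
  have := map_simple_apply_simple ρ s v
  rw [h, hρ.apply_simple_sroot] at this
  exact not_isPos_neg_sroot s (this ▸ hv)

/-! ### Dominance -/

lemma form_apply_simple_self_le_neg_one (hρ : IsGeometricRep M ρ) {ν : B → ℝ}
    (hν : IsRoot M ρ ν) {t : B} (h : 1 ≤ form M ν (sroot t) ^ 2) :
    form M (ρ (σ t) ν) ν ≤ -1 := by
  rw [hρ t ν, form_sub_left, form_smul_left, hρ.form_self_of_isRoot hν, form_comm (sroot t) ν]
  nlinarith

theorem not_isNeg_apply_of_form_le_neg_one (hρ : IsGeometricRep M ρ) {γ ν : B → ℝ}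
    (hγ : IsPosRoot M ρ γ) (hν : IsPosRoot M ρ ν) (h : form M γ ν ≤ -1) (w : M.Group)
    (hγw : IsNeg (ρ w γ)) : ¬ IsNeg (ρ w ν) := by
  induction hn : ℓ w using Nat.strong_induction_on generalizing w γ ν with
  | _ n ih =>
  intro hνw
  rcases eq_or_ne w 1 with rfl | hw1
  · exact hρ.not_isPos_of_isNeg hγ.1 (by simpa using hγw) hγ.2
  obtain ⟨t, ht⟩ := M.toCoxeterSystem.exists_rightDescent_of_ne_one hw1
  have hlt : ℓ (w * σ t) < n := by
    have := M.toCoxeterSystem.isRightDescent_iff.mp ht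
    omega
  have hcancel : ∀ v, ρ (w * σ t) (ρ (σ t) v) = ρ w v := fun v => by
    rw [map_mul_apply, map_simple_apply_simple]
  have hwt : IsNeg (ρ w (sroot t)) := hρ.isNeg_apply_sroot_of_isRightDescent ht
  -- when `γ = α_t`, replace the pair `(γ, ν)` by `(s_t ν, ν)`
  have key : ∀ {γ ν}, IsPosRoot M ρ γ → IsPosRoot M ρ ν → form M γ ν ≤ -1 →
      IsNeg (ρ w ν) → γ = sroot t → False := by
    rintro γ ν hγ hν h hνw rfl
    have hνt : ν ≠ sroot t := by
      rintro rfl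
      rw [form_sroot_sroot, pairing_self] at h
      norm_num at h
    rw [form_comm] at h
    refine ih _ hlt (hρ.isPosRoot_apply_simple hν hνt) hν
      (hρ.form_apply_simple_self_le_neg_one hν.1 (by nlinarith)) (w * σ t) (by rwa [hcancel])
      rfl ?_
    rw [map_mul_apply, hρ t ν, map_sub, map_smul]
    exact hνw.sub_smul_of_isNeg hwt (by linarith)
  by_cases hγt : γ = sroot t
  · exact key hγ hν h hνw hγt
  by_cases hνt : ν = sroot t
  · exact key hν hγ (form_comm γ ν ▸ h) hγw hνt
  exact ih _ hlt (hρ.isPosRoot_apply_simple hγ hγt) (hρ.isPosRoot_apply_simple hν hνt)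
    (by rwa [hρ.form_apply_simple]) (w * σ t) (by rwa [hcancel]) rfl (by rwa [hcancel])

theorem dominates_sroot_of_one_le_form (hρ : IsGeometricRep M ρ) {β : B → ℝ}
    (hβ : IsPosRoot M ρ β) {s : B} (h : 1 ≤ form M β (sroot s)) :
    Dominates M ρ β (sroot s) := by
  rcases eq_or_ne β (sroot s) with rfl | hne
  · exact fun _ => id
  intro w hw
  by_contra hpos
  have hneg := hρ.isNeg_of_not_isPos (hβ.1.apply w) hpos
  refine hρ.not_isNeg_apply_of_form_le_neg_one hβ (hρ.isPosRoot_apply_simple hβ hne) ?_ w hneg ?_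
  · rw [form_comm]
    exact hρ.form_apply_simple_self_le_neg_one hβ.1 (by nlinarith)
  · rw [hρ s β, map_sub, map_smul]
    exact hneg.sub_smul hw (by linarith)

/-- The new root is `-r_γ(ν) = 2 ⟨γ, ν⟩ γ - ν`. -/
lemma form_pos_and_exists_dominates (hρ : IsGeometricRep M ρ) {γ ν : B → ℝ}
    (hγ : IsPosRoot M ρ γ) (hν : IsPosRoot M ρ ν) (hdom : Dominates M ρ γ ν) :
    0 < form M γ ν ∧ ∃ γ', IsPosRoot M ρ γ' ∧ Dominates M ρ γ' ν ∧
      form M γ' ν = 2 * form M γ ν ^ 2 - 1 := by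
  obtain ⟨r, hr⟩ := hρ.exists_reflection hγ.1
  have hrγ : ρ r γ = -γ := by
    rw [hr, hρ.form_self_of_isRoot hγ.1]
    module
  have hnot : ¬ IsPos (ρ r ν) := fun hpos =>
    hρ.not_isPos_of_isNeg hγ.1 (isPos_neg_iff.mp (hrγ ▸ hdom r hpos)) hγ.2
  have hroot : IsRoot M ρ (-ρ r ν) := hρ.isRoot_neg (hν.1.apply r)
  refine ⟨?_, -ρ r ν, ⟨hroot, isPos_neg_iff.mpr (hρ.isNeg_of_not_isPos (hν.1.apply r) hnot)⟩,
    fun v hv => ?_, ?_⟩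
  · by_contra! hx
    apply hnot
    rw [hr, form_comm]
    exact hν.2.sub_smul hγ.2 (by linarith)
  · by_contra hpos
    have hneg := hρ.isNeg_of_not_isPos (hroot.apply v) hpos
    rw [map_neg, isNeg_neg_iff] at hneg
    have := hrγ ▸ hdom.apply r v hneg
    rw [map_neg, isPos_neg_iff] at this
    exact hρ.not_isPos_of_isNeg (hγ.1.apply v) this (hdom v hv)
  · rw [form_neg_left, hr, form_sub_left, form_smul_left, hρ.form_self_of_isRoot hν.1,
      form_comm ν γ]
    ring

theorem one_le_form_of_dominates (hρ : IsGeometricRep M ρ) {γ ν : B → ℝ}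
    (hγ : IsPosRoot M ρ γ) (hν : IsPosRoot M ρ ν) (hdom : Dominates M ρ γ ν) :
    1 ≤ form M γ ν := by
  have hiter : ∀ n γ, IsPosRoot M ρ γ → Dominates M ρ γ ν →
      0 < (fun y : ℝ => 2 * y ^ 2 - 1)^[n] (form M γ ν) := by
    intro n
    induction n with
    | zero => exact fun γ hγ hdom => (hρ.form_pos_and_exists_dominates hγ hν hdom).1
    | succ n ih =>
      intro γ hγ hdom
      obtain ⟨-, γ', hγ', hdom', hform⟩ := hρ.form_pos_and_exists_dominates hγ hν hdom
      rw [Function.iterate_succ_apply, ← hform]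
      exact ih γ' hγ' hdom'
  by_contra! hlt
  obtain ⟨n, hn⟩ := exists_iterate_two_mul_sq_sub_one_nonpos hlt
  exact (hiter n γ hγ hdom).not_ge hn

/-! ### Depth and minimal roots -/

lemma exists_length_eq_depth (hρ : IsGeometricRep M ρ) {lam : B → ℝ} (h : IsRoot M ρ lam) :
    ∃ w : M.Group, IsNeg (ρ w⁻¹ lam) ∧ ℓ w = depth M ρ lam := by
  have hne : {n | ∃ w : M.Group, IsNeg (ρ w⁻¹ lam) ∧ ℓ w = n}.Nonempty := by
    rcases hρ.isPos_or_isNeg h with hpos | hneg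
    · obtain ⟨r, hr⟩ := hρ.exists_reflection h
      refine ⟨ℓ r⁻¹, r⁻¹, ?_, rfl⟩
      rw [inv_inv, hr, hρ.form_self_of_isRoot h]
      convert isNeg_neg_iff.mpr hpos using 1
      module
    · exact ⟨0, 1, by simpa using hneg, by simp⟩
  exact Nat.sInf_mem hne

lemma depth_apply_le (hρ : IsGeometricRep M ρ) {lam : B → ℝ} (h : IsRoot M ρ lam)
    (w : M.Group) : depth M ρ (ρ w lam) ≤ ℓ w + depth M ρ lam := by
  obtain ⟨u, hu, hlen⟩ := hρ.exists_length_eq_depth h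
  calc depth M ρ (ρ w lam) ≤ ℓ (w * u) := depth_le_length (by
        rwa [mul_inv_rev, map_mul_apply, Representation.inv_self_apply ρ])
    _ ≤ ℓ w + depth M ρ lam := hlen ▸ M.toCoxeterSystem.length_mul_le w u

lemma one_le_depth (hρ : IsGeometricRep M ρ) {lam : B → ℝ} (h : IsPosRoot M ρ lam) :
    1 ≤ depth M ρ lam := by
  obtain ⟨u, hu, hlen⟩ := hρ.exists_length_eq_depth h.1
  by_contra! h0
  obtain rfl : u = 1 := M.toCoxeterSystem.length_eq_zero_iff.mp (by omega)
  exact hρ.not_isPos_of_isNeg h.1 (by simpa using hu) h.2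

lemma isPos_of_depth_pos (hρ : IsGeometricRep M ρ) {lam : B → ℝ} (h : IsRoot M ρ lam)
    (hd : 0 < depth M ρ lam) : IsPos lam := by
  by_contra hpos
  have := depth_le_length (ρ := ρ) (w := 1) (by simpa using hρ.isNeg_of_not_isPos h hpos)
  simp at this
  omega

lemma depth_apply_simple_le_of_form_nonneg (hρ : IsGeometricRep M ρ) {lam : B → ℝ}
    (h : IsRoot M ρ lam) {t : B} (hx : 0 ≤ form M lam (sroot t)) :
    depth M ρ (ρ (σ t) lam) ≤ depth M ρ lam := by
  obtain ⟨u, hu, hlen⟩ := hρ.exists_length_eq_depth h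
  by_cases hd : M.toCoxeterSystem.IsLeftDescent u t
  · calc depth M ρ (ρ (σ t) lam) ≤ ℓ (σ t * u) := depth_le_length (by
          rwa [mul_inv_rev, inv_simple, map_mul_apply, map_simple_apply_simple])
      _ ≤ depth M ρ lam := hlen ▸ hd.le
  · have hpos : IsPos (ρ u⁻¹ (sroot t)) := hρ.isPos_apply_sroot_of_not_isRightDescent
      (by rwa [isRightDescent_inv_iff])
    refine hlen ▸ depth_le_length ?_
    rw [hρ t lam, map_sub, map_smul]
    exact hu.sub_smul hpos (by linarith)

lemma dominates_sroot_of_not_isMinimal_apply_simple (hρ : IsGeometricRep M ρ) {lam : B → ℝ}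
    (hlam : IsMinimal M ρ lam) {s : B} (h1 : IsPosRoot M ρ (ρ (σ s) lam))
    (h2 : ¬ IsMinimal M ρ (ρ (σ s) lam)) : Dominates M ρ (ρ (σ s) lam) (sroot s) := by
  simp only [IsMinimal, h1, true_and, not_forall] at h2
  obtain ⟨ν, hν, hdom, hne⟩ := h2
  have hdom' : Dominates M ρ lam (ρ (σ s) ν) := by
    simpa only [map_simple_apply_simple] using hdom.apply (σ s)
  have hneg : IsNeg (ρ (σ s) ν) := hρ.isNeg_of_not_isPos (hν.1.apply _) fun hpos => hne (by
    rw [← hlam.2 _ ⟨hν.1.apply _, hpos⟩ hdom', map_simple_apply_simple])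
  rwa [hρ.eq_sroot_of_isNeg_apply_simple hν hneg] at hdom

lemma form_sroot_le_neg_one_of_dominates (hρ : IsGeometricRep M ρ) {lam : B → ℝ} {s : B}
    (h1 : IsPosRoot M ρ (ρ (σ s) lam)) (hdom : Dominates M ρ (ρ (σ s) lam) (sroot s)) :
    form M lam (sroot s) ≤ -1 := by
  have := hρ.one_le_form_of_dominates h1 (isPosRoot_sroot s) hdom
  rw [hρ.form_apply_simple_sroot] at this
  linarith

lemma isMinimal_of_isMinimal_apply_simple (hρ : IsGeometricRep M ρ) {κ : B → ℝ}
    (hκ : IsPosRoot M ρ κ) {t : B} (hmin : IsMinimal M ρ (ρ (σ t) κ))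
    (hx : form M κ (sroot t) < 0) : IsMinimal M ρ κ := by
  refine ⟨hκ, fun τ hτ hdom => ?_⟩
  by_cases hpos : IsPos (ρ (σ t) τ)
  · have := congrArg (ρ (σ t)) (hmin.2 _ ⟨hτ.1.apply _, hpos⟩ (hdom.apply _))
    rwa [map_simple_apply_simple, map_simple_apply_simple] at this
  · rw [hρ.eq_sroot_of_isNeg_apply_simple hτ (hρ.isNeg_of_not_isPos (hτ.1.apply _) hpos)] at hdom
    linarith [hρ.one_le_form_of_dominates hκ (isPosRoot_sroot t) hdom]

lemma eq_sroot_of_isMinimal (hρ : IsGeometricRep M ρ) {mu : B → ℝ} (hmu : IsMinimal M ρ mu)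
    {s : B} (h : 1 ≤ form M mu (sroot s)) : mu = sroot s :=
  (hmu.2 _ (isPosRoot_sroot s) (hρ.dominates_sroot_of_one_le_form hmu.1 h)).symm

lemma isPosRoot_apply_simple_and_not_isMinimal (hρ : IsGeometricRep M ρ) {mu : B → ℝ}
    (hmu : IsPosRoot M ρ mu) {s : B} (h : form M mu (sroot s) ≤ -1) :
    IsPosRoot M ρ (ρ (σ s) mu) ∧ ¬ IsMinimal M ρ (ρ (σ s) mu) := by
  have hpos : IsPosRoot M ρ (ρ (σ s) mu) := ⟨hmu.1.apply _, by
    rw [hρ s mu]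
    exact hmu.2.sub_smul (isPos_sroot s) (by linarith)⟩
  have hdom := hρ.dominates_sroot_of_one_le_form hpos (s := s)
    (by rw [hρ.form_apply_simple_sroot]; linarith)
  exact ⟨hpos, not_isMinimal_of_dominates hdom (isPosRoot_sroot s)
    (hρ.apply_simple_ne_sroot hmu.2 s).symm⟩

lemma isPosRoot_and_depth_eq_of_depth_apply_simple_eq (hρ : IsGeometricRep M ρ)
    {lam : B → ℝ} (hlam : IsPosRoot M ρ lam) (w : M.Group) (i : B)
    (hd : depth M ρ (ρ (σ i) (ρ w lam)) = ℓ w + 1 + depth M ρ lam) :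
    IsPosRoot M ρ (ρ w lam) ∧ depth M ρ (ρ w lam) = ℓ w + depth M ρ lam ∧
      form M (ρ w lam) (sroot i) < 0 := by
  have hroot := hlam.1.apply w
  have hstep := hρ.depth_apply_le hroot (σ i)
  have hw := hρ.depth_apply_le hlam.1 w
  have hlam1 := hρ.one_le_depth hlam
  rw [length_simple] at hstep
  refine ⟨⟨hroot, hρ.isPos_of_depth_pos hroot (by omega)⟩, by omega, ?_⟩
  by_contra! hx
  have := hρ.depth_apply_simple_le_of_form_nonneg hroot hx
  omega

theorem form_le_neg_one_or_isNeg_of_depth_eq (hρ : IsGeometricRep M ρ) {lam : B → ℝ}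
    (hlam : IsPosRoot M ρ lam) {s : B} (hs : form M lam (sroot s) ≤ -1) (w : M.Group)
    (hmin : IsMinimal M ρ (ρ w lam)) (hd : depth M ρ (ρ w lam) = ℓ w + depth M ρ lam) :
    form M (ρ w lam) (sroot s) ≤ -1 ∨ IsNeg (ρ w (sroot s)) := by
  induction hn : ℓ w using Nat.strong_induction_on generalizing w with
  | _ n ih =>
  rcases eq_or_ne w 1 with rfl | hw1
  · simpa using Or.inl hs
  obtain ⟨i, hi⟩ := M.toCoxeterSystem.exists_leftDescent_of_ne_one hw1
  obtain ⟨w, rfl⟩ : ∃ w', σ i * w' = w := ⟨σ i * w, simple_mul_simple_cancel_left _ _⟩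
  have hlen := M.toCoxeterSystem.isLeftDescent_iff.mp hi
  rw [simple_mul_simple_cancel_left] at hlen
  rw [map_mul_apply] at hmin hd ⊢
  obtain ⟨hμ, hdμ, hx⟩ :=
    hρ.isPosRoot_and_depth_eq_of_depth_apply_simple_eq hlam w i (by omega)
  rcases ih _ (by omega) w (hρ.isMinimal_of_isMinimal_apply_simple hμ hmin hx) hdμ rfl with
    hform | hneg
  · left
    rcases eq_or_ne i s with rfl | his
    · refine absurd (hρ.eq_sroot_of_isMinimal hmin ?_) (hρ.apply_simple_ne_sroot hμ.2 i)
      rw [hρ.form_apply_simple_sroot]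
      linarith
    rw [hρ.form_apply_left, inv_simple, hρ i, form_sub_right, form_smul_right,
      form_sroot_sroot]
    nlinarith [pairing_nonpos M his.symm]
  · right
    rw [map_mul_apply]
    refine hρ.isNeg_apply_simple ((isRoot_sroot s).apply w) hneg fun heq => ?_
    have := hρ.form_apply w lam (sroot s)
    rw [heq, form_neg_right] at this
    linarith

lemma isPosRoot_apply_simple_and_not_isMinimal_of_isNeg (hρ : IsGeometricRep M ρ)
    {lam : B → ℝ} (hlam : IsPosRoot M ρ lam) {s : B} (hs : form M lam (sroot s) ≤ -1)
    (hdom : Dominates M ρ (ρ (σ s) lam) (sroot s)) {w : M.Group}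
    (hmin : IsMinimal M ρ (ρ w lam)) (hd : depth M ρ (ρ w lam) = ℓ w + depth M ρ lam)
    (hneg : IsNeg (ρ w (sroot s))) :
    IsPosRoot M ρ (ρ (σ s) (ρ w lam)) ∧ ¬ IsMinimal M ρ (ρ (σ s) (ρ w lam)) := by
  have hne : ρ w lam ≠ sroot s := by
    intro h
    have h1 : depth M ρ (ρ w lam) ≤ 1 := by
      rw [h, ← M.toCoxeterSystem.length_simple s]
      exact depth_le_length (by
        rw [inv_simple, hρ.apply_simple_sroot, isNeg_neg_iff]; exact isPos_sroot s)
    obtain rfl : w = 1 := M.toCoxeterSystem.length_eq_zero_iff.mp (by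
      have := hρ.one_le_depth hlam
      omega)
    exact hρ.not_isPos_of_isNeg (isRoot_sroot s) (by simpa using hneg) (isPos_sroot s)
  have hη : ρ w (sroot s) ≠ -sroot s := fun h => hne (hρ.eq_sroot_of_isMinimal hmin (by
    rw [← neg_neg (sroot s), ← h, form_neg_right, hρ.form_apply]
    linarith))
  have hξ : IsPosRoot M ρ (ρ (σ s) (-ρ w (sroot s))) :=
    hρ.isPosRoot_apply_simple ⟨hρ.isRoot_neg ((isRoot_sroot s).apply w), isPos_neg_iff.mpr hneg⟩
      fun h => hη (neg_eq_iff_eq_neg.mp h)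
  have hdom' : Dominates M ρ (ρ (σ s) (ρ w lam)) (ρ (σ s) (-ρ w (sroot s))) := by
    simpa only [map_mul_apply, map_simple_apply_simple, hρ.apply_simple_sroot, map_neg]
      using hdom.apply (σ s * w * σ s)
  refine ⟨hρ.isPosRoot_apply_simple hmin.1 hne, not_isMinimal_of_dominates hdom' hξ fun h => ?_⟩
  rw [(Representation.apply_bijective ρ _).injective.eq_iff, ← map_neg,
    (Representation.apply_bijective ρ _).injective.eq_iff] at h
  exact not_isPos_neg_sroot s (h ▸ hlam.2)

end IsGeometricRep

theorem statement8 [DecidableEq B] [Fintype B] (M : CoxeterMatrix B)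
    (ρ : M.Group →* Module.End ℝ (B → ℝ))
    (hρ : ∀ (s : B) (v : B → ℝ),
      ρ (M.simple s) v = v - (2 * form M v (sroot s)) • sroot s)
    (lam mu : B → ℝ) (hlam : IsMinimal M ρ lam) (hmu : IsMinimal M ρ mu)
    (hle : PLE M ρ lam mu) (s : B)
    (h1 : IsPosRoot M ρ (ρ (M.simple s) lam))
    (h2 : ¬ IsMinimal M ρ (ρ (M.simple s) lam)) :
    IsPosRoot M ρ (ρ (M.simple s) mu) ∧
      ¬ IsMinimal M ρ (ρ (M.simple s) mu) := by
  have hρ : IsGeometricRep M ρ := hρ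
  obtain ⟨w, rfl, hd⟩ := hle
  have hdom := hρ.dominates_sroot_of_not_isMinimal_apply_simple hlam h1 h2
  have hs := hρ.form_sroot_le_neg_one_of_dominates h1 hdom
  rcases hρ.form_le_neg_one_or_isNeg_of_depth_eq hlam.1 hs w hmu hd with hform | hneg
  · exact hρ.isPosRoot_apply_simple_and_not_isMinimal hmu.1 hform
  · exact hρ.isPosRoot_apply_simple_and_not_isMinimal_of_isNeg hlam.1 hs hdom hmu hd hneg
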